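/- For every nonnegative integer n, the sum over k from 0 to n of (-q)^k times the q-binomial coefficient (n choose k)_q equals (q; q^2)_{floor((n+1)/2)} = prod_{j=0}^{floor((n+1)/2)-1}(1 - q^{2j+1}). -/

import Mathlib

open Finset

/-!
Let `G n x = ∑ₖ xᵏ [n, k]`. The Pascal recurrence gives `G (n+1) x = x G n x + G n (q x)`, and
from it one derives by induction the companion recurrence
`G (n+1) (q x) = G n (q x) + q^(n+1) x G n x`. At `x = -1` the two recurrences couple
`S n = G n (-q)` and `B n = G n (-1)`:
`B (n+1) = S n - B n` and `S (n+1) = S n - q^(n+1) B n`.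
By induction on `m`, `S (2m) = B (2m) = ∏_{j<m} (1 - q^(2j+1))` (with `B (2m+1) = 0` in between),
and then `S (2m+1) = S (2m) (1 - q^(2m+1))`.
-/

/-- Gaussian (q-)binomial coefficient, defined over any commutative ring by the
Pascal-type recurrence `[n+1, k+1] = [n, k] + q^(k+1) * [n, k+1]`. -/
def qbinom {R : Type*} [CommRing R] (q : R) : ℕ → ℕ → R
  | _, 0 => 1
  | 0, _ + 1 => 0
  | n + 1, k + 1 => qbinom q n k + q ^ (k + 1) * qbinom q n (k + 1)

section

variable {R : Type*} [CommRing R]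

lemma qbinom_zero_right (q : R) (n : ℕ) : qbinom q n 0 = 1 := by
  cases n <;> rfl

lemma qbinom_succ_succ (q : R) (n k : ℕ) :
    qbinom q (n + 1) (k + 1) = qbinom q n k + q ^ (k + 1) * qbinom q n (k + 1) := rfl

lemma qbinom_eq_zero_of_lt (q : R) {n k : ℕ} (h : n < k) : qbinom q n k = 0 := by
  induction n generalizing k with
  | zero => obtain ⟨k, rfl⟩ := Nat.exists_eq_succ_of_ne_zero h.ne'; rfl
  | succ n ih =>
    obtain ⟨k, rfl⟩ := Nat.exists_eq_succ_of_ne_zero (Nat.zero_lt_of_lt h).ne'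
    rw [qbinom_succ_succ, ih (by omega), ih (by omega), mul_zero, add_zero]

def qbinomSum (q x : R) (n : ℕ) : R :=
  ∑ k ∈ range (n + 1), x ^ k * qbinom q n k

lemma qbinomSum_zero (q x : R) : qbinomSum q x 0 = 1 := by
  simp [qbinomSum, qbinom_zero_right]

lemma qbinomSum_eq_one_add (q x : R) (n : ℕ) :
    qbinomSum q x n = 1 + ∑ k ∈ range n, x ^ (k + 1) * qbinom q n (k + 1) := by
  rw [qbinomSum, sum_range_succ', qbinom_zero_right]
  ring

lemma qbinomSum_succ (q x : R) (n : ℕ) :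
    qbinomSum q x (n + 1) = x * qbinomSum q x n + qbinomSum q (q * x) n := by
  calc qbinomSum q x (n + 1)
      = 1 + ∑ k ∈ range (n + 1), x ^ (k + 1) * qbinom q (n + 1) (k + 1) :=
        qbinomSum_eq_one_add q x (n + 1)
    _ = 1 + ∑ k ∈ range (n + 1),
          (x * (x ^ k * qbinom q n k) + (q * x) ^ (k + 1) * qbinom q n (k + 1)) := by
        congr 1
        refine sum_congr rfl fun k _ => ?_
        rw [qbinom_succ_succ]
        ring
    _ = x * qbinomSum q x n + qbinomSum q (q * x) n := by
        rw [sum_add_distrib, sum_range_succ (fun k => (q * x) ^ (k + 1) * qbinom q n (k + 1)),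
          qbinom_eq_zero_of_lt q n.lt_succ_self, ← mul_sum, qbinomSum_eq_one_add q (q * x),
          qbinomSum]
        ring

lemma qbinomSum_succ_mul_left (q x : R) (n : ℕ) :
    qbinomSum q (q * x) (n + 1) = qbinomSum q (q * x) n + q ^ (n + 1) * x * qbinomSum q x n := by
  induction n generalizing x with
  | zero =>
    simp only [qbinomSum_succ, qbinomSum_zero]
    ring
  | succ n ih =>
    linear_combination qbinomSum_succ q (q * x) (n + 1) + q * x * ih x + ih (q * x)
      - qbinomSum_succ q (q * x) n - q ^ (n + 2) * x * qbinomSum_succ q x n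

lemma qbinomSum_neg_one_succ (q : R) (n : ℕ) :
    qbinomSum q (-1) (n + 1) = qbinomSum q (-q) n - qbinomSum q (-1) n := by
  rw [qbinomSum_succ, mul_neg_one]
  ring

lemma qbinomSum_neg_succ (q : R) (n : ℕ) :
    qbinomSum q (-q) (n + 1) = qbinomSum q (-q) n - q ^ (n + 1) * qbinomSum q (-1) n := by
  rw [← mul_neg_one q, qbinomSum_succ_mul_left]
  ring

lemma qbinomSum_neg_two_mul (q : R) (m : ℕ) :
    qbinomSum q (-q) (2 * m) = ∏ j ∈ range m, (1 - q ^ (2 * j + 1)) ∧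
      qbinomSum q (-1) (2 * m) = ∏ j ∈ range m, (1 - q ^ (2 * j + 1)) := by
  induction m with
  | zero => simp [qbinomSum_zero]
  | succ m ih =>
    obtain ⟨hS, hB⟩ := ih
    rw [show 2 * (m + 1) = 2 * m + 1 + 1 by ring, prod_range_succ]
    refine ⟨?_, ?_⟩
    · rw [qbinomSum_neg_succ, qbinomSum_neg_succ, qbinomSum_neg_one_succ, hS, hB]; ring
    · rw [qbinomSum_neg_one_succ, qbinomSum_neg_succ, qbinomSum_neg_one_succ, hS, hB]; ring

end

theorem stmt2 {R : Type*} [CommRing R] (q : R) (n : ℕ) :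
    ∑ k ∈ Finset.range (n + 1), (-q) ^ k * qbinom q n k =
      ∏ j ∈ Finset.range ((n + 1) / 2), (1 - q ^ (2 * j + 1)) := by
  change qbinomSum q (-q) n = _
  obtain ⟨m, rfl | rfl⟩ := Nat.even_or_odd' n
  · rw [show (2 * m + 1) / 2 = m by omega, (qbinomSum_neg_two_mul q m).1]
  · rw [show (2 * m + 1 + 1) / 2 = m + 1 by omega, qbinomSum_neg_succ,
      (qbinomSum_neg_two_mul q m).1, (qbinomSum_neg_two_mul q m).2, prod_range_succ]
    ring
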